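/- arXiv:1204.1442 — 3 statements merged into one kernel-verified Lean document; each statement's English description precedes it below -/
import Mathlib

section
/- Let $a(\theta) = 1 - i\frac{\mu k}{h}\sin\theta - \frac{2(1-\rho)k}{h^2}\sin^2\frac{\theta}{2}$, $b(\theta) = -i\frac{\sqrt{\rho k}}{h}\sin\theta$, $c(\theta) = -\frac{2\rho k}{h^2}\sin^2\frac{\theta}{2}$. Then for all $\theta$, $|a|^2 + |b|^2 + 3|c|^2 + a c^* + a^* c = 1 - 4\sin^2\frac{\theta}{2}\left\{\frac{k}{h^2} - (1+2\rho^2)\left(\frac{k}{h^2}\right)^2\sin^2\frac{\theta}{2} - \left(\left(\frac{\mu k}{h}\right)^2 + \frac{\rho k}{h^2}\right)\cos^2\frac{\theta}{2}\right\}$. -/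
/-!
Completing the square, `|a|² + 3|c|² + a c̄ + ā c = |a + c|² + 2|c|²`. The diffusion parts of
`a` and `c` add up to `-2 (k/h²) sin²(θ/2)`, independent of `ρ`, and writing
`sin θ = 2 sin(θ/2) cos(θ/2)` turns the claim into a polynomial identity in `sin(θ/2)`, `cos(θ/2)`.
-/

open Complex ComplexConjugate

lemma sq_norm_add_three_sq_norm_add_cross_eq (a c : ℂ) :
    (‖a‖ ^ 2 + 3 * ‖c‖ ^ 2 : ℂ) + a * conj c + conj a * c = ‖a + c‖ ^ 2 + 2 * ‖c‖ ^ 2 := by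
  simp only [← mul_conj', map_add]
  ring

lemma sq_norm_ofReal_add_ofReal_mul_I (x y : ℝ) : ‖(x + y * I : ℂ)‖ ^ 2 = x ^ 2 + y ^ 2 := by
  rw [norm_add_mul_I, Real.sq_sqrt (by positivity)]

theorem stmt_2_general (μ ρ k h : ℝ) (hρ0 : 0 ≤ ρ) (hk : 0 < k)
    (a b c : ℝ → ℂ)
    (ha : ∀ θ, a θ = 1 - Complex.I * (μ * k / h) * Real.sin θ
        - (2 * (1 - ρ) * k / h ^ 2) * Real.sin (θ / 2) ^ 2)
    (hb : ∀ θ, b θ = -Complex.I * (Real.sqrt (ρ * k) / h) * Real.sin θ)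
    (hc : ∀ θ, c θ = -(2 * ρ * k / h ^ 2) * Real.sin (θ / 2) ^ 2) :
    ∀ θ : ℝ,
      (‖a θ‖ ^ 2 + ‖b θ‖ ^ 2 + 3 * ‖c θ‖ ^ 2 : ℂ)
        + a θ * (starRingEnd ℂ) (c θ) + (starRingEnd ℂ) (a θ) * c θ =
      1 - 4 * Real.sin (θ / 2) ^ 2 *
        ((k / h ^ 2 : ℝ)
          - (1 + 2 * ρ ^ 2) * (k / h ^ 2) ^ 2 * Real.sin (θ / 2) ^ 2
          - ((μ * k / h) ^ 2 + ρ * k / h ^ 2) * Real.cos (θ / 2) ^ 2 : ℝ) := by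
  intro θ
  have hac : a θ + c θ =
      ((1 - 2 * (k / h ^ 2) * Real.sin (θ / 2) ^ 2 : ℝ) + (-(μ * k / h * Real.sin θ) : ℝ) * I) := by
    rw [ha, hc]; push_cast; ring
  have hb2 : ‖b θ‖ ^ 2 = ρ * k / h ^ 2 * Real.sin θ ^ 2 := by
    rw [show b θ = ((-(Real.sqrt (ρ * k) / h * Real.sin θ) : ℝ) : ℂ) * I by rw [hb]; push_cast; ring,
      norm_mul, norm_I, mul_one, norm_real, Real.norm_eq_abs, sq_abs, neg_sq, mul_pow, div_pow,
      Real.sq_sqrt (mul_nonneg hρ0 hk.le)]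
  have hc2 : ‖c θ‖ ^ 2 = (2 * ρ * k / h ^ 2 * Real.sin (θ / 2) ^ 2) ^ 2 := by
    rw [show c θ = ((-(2 * ρ * k / h ^ 2 * Real.sin (θ / 2) ^ 2) : ℝ) : ℂ) by rw [hc]; push_cast; ring,
      norm_real, Real.norm_eq_abs, sq_abs, neg_sq]
  have hsin : Real.sin θ = 2 * Real.sin (θ / 2) * Real.cos (θ / 2) := by
    rw [← Real.sin_two_mul, mul_div_cancel₀ θ two_ne_zero]
  have hreal : ‖a θ + c θ‖ ^ 2 + 2 * ‖c θ‖ ^ 2 + ‖b θ‖ ^ 2 =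
      1 - 4 * Real.sin (θ / 2) ^ 2 * (k / h ^ 2
          - (1 + 2 * ρ ^ 2) * (k / h ^ 2) ^ 2 * Real.sin (θ / 2) ^ 2
          - ((μ * k / h) ^ 2 + ρ * k / h ^ 2) * Real.cos (θ / 2) ^ 2) := by
    rw [hac, sq_norm_ofReal_add_ofReal_mul_I, hb2, hc2, hsin]
    ring
  rw [add_right_comm (‖a θ‖ ^ 2 : ℂ), add_right_comm _ (‖b θ‖ ^ 2 : ℂ),
    add_right_comm _ (‖b θ‖ ^ 2 : ℂ), sq_norm_add_three_sq_norm_add_cross_eq]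
  exact_mod_cast hreal

/-- Fourier symbol identity for the Milstein finite difference scheme. -/
theorem stmt_2 (μ ρ k h : ℝ) (hρ0 : 0 ≤ ρ) (hρ1 : ρ ≤ 1) (hk : 0 < k) (hh : 0 < h)
    (a b c : ℝ → ℂ)
    (ha : ∀ θ, a θ = 1 - Complex.I * (μ * k / h) * Real.sin θ
        - (2 * (1 - ρ) * k / h ^ 2) * Real.sin (θ / 2) ^ 2)
    (hb : ∀ θ, b θ = -Complex.I * (Real.sqrt (ρ * k) / h) * Real.sin θ)
    (hc : ∀ θ, c θ = -(2 * ρ * k / h ^ 2) * Real.sin (θ / 2) ^ 2) :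
    ∀ θ : ℝ,
      (‖a θ‖ ^ 2 + ‖b θ‖ ^ 2 + 3 * ‖c θ‖ ^ 2 : ℂ)
        + a θ * (starRingEnd ℂ) (c θ) + (starRingEnd ℂ) (a θ) * c θ =
      1 - 4 * Real.sin (θ / 2) ^ 2 *
        ((k / h ^ 2 : ℝ)
          - (1 + 2 * ρ ^ 2) * (k / h ^ 2) ^ 2 * Real.sin (θ / 2) ^ 2
          - ((μ * k / h) ^ 2 + ρ * k / h ^ 2) * Real.cos (θ / 2) ^ 2 : ℝ) :=
  stmt_2_general μ ρ k h hρ0 hk a b c ha hb hc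
end

section
/- With $a, b, c$ as above, if $\mu^2 k \le 1-\rho$ and $k/h^2 \le (1+2\rho^2)^{-1}$, then for all $\theta \in \mathbb{R}$, $|a(\theta)+c(\theta)|^2 + |b(\theta)|^2 + 2|c(\theta)|^2 \le 1$. -/
/-!
With `K = k / h²` and `u = sin² (θ/2)`, so that `sin² θ = 4u(1 - u)`, the amplification factor is
`(1 - 2Ku)² + (μ²k + ρ) K · 4u(1 - u) + 2 (2ρKu)²`. The first condition bounds the middle term by
`4Ku(1 - u)`, which leaves `1 - 4Ku² (1 - K(1 + 2ρ²))`, and the second condition makes this at most `1`.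
-/

open Complex

lemma Real.sin_sq_eq_four_mul_sin_sq_half (θ : ℝ) :
    Real.sin θ ^ 2 = 4 * Real.sin (θ / 2) ^ 2 * (1 - Real.sin (θ / 2) ^ 2) := by
  conv_lhs => rw [← mul_div_cancel₀ θ two_ne_zero, Real.sin_two_mul]
  rw [← Real.cos_sq']
  ring

lemma milstein_amplification_le_one {K u m r : ℝ} (hK : 0 ≤ K) (hu0 : 0 ≤ u) (hu1 : u ≤ 1)
    (hmr : m + r ≤ 1) (hKr : K * (1 + 2 * r ^ 2) ≤ 1) :
    (1 - 2 * K * u) ^ 2 + (m + r) * K * (4 * u * (1 - u)) + 2 * (2 * r * K * u) ^ 2 ≤ 1 := by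
  have hdrift : (m + r) * K * (4 * u * (1 - u)) ≤ K * (4 * u * (1 - u)) :=
    mul_le_mul_of_nonneg_right (mul_le_of_le_one_left hK hmr)
      (mul_nonneg (mul_nonneg zero_le_four hu0) (sub_nonneg.mpr hu1))
  have hdiffusion : 0 ≤ 4 * K * u ^ 2 * (1 - K * (1 + 2 * r ^ 2)) :=
    mul_nonneg (by positivity) (sub_nonneg.mpr hKr)
  linear_combination hdrift + hdiffusion

theorem stmt_3_general (μ ρ k h : ℝ) (hρ0 : 0 ≤ ρ) (hk : 0 < k)
    (a b c : ℝ → ℂ)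
    (ha : ∀ θ, a θ = 1 - Complex.I * (μ * k / h) * Real.sin θ
        - (2 * (1 - ρ) * k / h ^ 2) * Real.sin (θ / 2) ^ 2)
    (hb : ∀ θ, b θ = -Complex.I * (Real.sqrt (ρ * k) / h) * Real.sin θ)
    (hc : ∀ θ, c θ = -(2 * ρ * k / h ^ 2) * Real.sin (θ / 2) ^ 2)
    (h1 : μ ^ 2 * k ≤ 1 - ρ) (h2 : k / h ^ 2 ≤ (1 + 2 * ρ ^ 2)⁻¹) :
    ∀ θ : ℝ,
      ‖a θ + c θ‖ ^ 2 + ‖b θ‖ ^ 2 + 2 * ‖c θ‖ ^ 2 ≤ 1 := by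
  intro θ
  have hac : a θ + c θ = ((1 - 2 * (k / h ^ 2) * Real.sin (θ / 2) ^ 2 : ℝ) : ℂ)
      + ((-(μ * k / h * Real.sin θ) : ℝ) : ℂ) * I := by
    rw [ha, hc]; push_cast; ring
  have hb' : b θ = ((0 : ℝ) : ℂ) + ((-(Real.sqrt (ρ * k) / h * Real.sin θ) : ℝ) : ℂ) * I := by
    rw [hb]; push_cast; ring
  have hc' : c θ = ((-(2 * ρ * (k / h ^ 2) * Real.sin (θ / 2) ^ 2) : ℝ) : ℂ) := by
    rw [hc]; push_cast; ring
  have hsin := Real.sin_sq_eq_four_mul_sin_sq_half θ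
  have hsqrt : Real.sqrt (ρ * k) ^ 2 = ρ * k := Real.sq_sqrt (by positivity)
  have hKr : k / h ^ 2 * (1 + 2 * ρ ^ 2) ≤ 1 := by
    rwa [← le_inv_mul_iff₀' (by positivity), mul_one]
  calc ‖a θ + c θ‖ ^ 2 + ‖b θ‖ ^ 2 + 2 * ‖c θ‖ ^ 2
      = (1 - 2 * (k / h ^ 2) * Real.sin (θ / 2) ^ 2) ^ 2
          + (μ ^ 2 * k + ρ) * (k / h ^ 2) * (4 * Real.sin (θ / 2) ^ 2 * (1 - Real.sin (θ / 2) ^ 2))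
          + 2 * (2 * ρ * (k / h ^ 2) * Real.sin (θ / 2) ^ 2) ^ 2 := by
        rw [hac, hb', hc', Complex.sq_norm, Complex.sq_norm, Complex.normSq_add_mul_I,
          Complex.normSq_add_mul_I, Complex.norm_real, Real.norm_eq_abs, sq_abs]
        linear_combination (μ ^ 2 * k ^ 2 / h ^ 2 + ρ * k / h ^ 2) * hsin
          + Real.sin θ ^ 2 / h ^ 2 * hsqrt
    _ ≤ 1 := milstein_amplification_le_one (by positivity) (sq_nonneg _)
        (Real.sin_sq_le_one _) (by linarith) hKr

/-- Sufficiency of the two stability conditions for mean-square stability of every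
Fourier mode of the Milstein finite difference scheme. -/
theorem stmt_3 (μ ρ k h : ℝ) (hρ0 : 0 ≤ ρ) (hρ1 : ρ ≤ 1) (hk : 0 < k) (hh : 0 < h)
    (a b c : ℝ → ℂ)
    (ha : ∀ θ, a θ = 1 - Complex.I * (μ * k / h) * Real.sin θ
        - (2 * (1 - ρ) * k / h ^ 2) * Real.sin (θ / 2) ^ 2)
    (hb : ∀ θ, b θ = -Complex.I * (Real.sqrt (ρ * k) / h) * Real.sin θ)
    (hc : ∀ θ, c θ = -(2 * ρ * k / h ^ 2) * Real.sin (θ / 2) ^ 2)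
    (h1 : μ ^ 2 * k ≤ 1 - ρ) (h2 : k / h ^ 2 ≤ (1 + 2 * ρ ^ 2)⁻¹) :
    ∀ θ : ℝ,
      ‖a θ + c θ‖ ^ 2 + ‖b θ‖ ^ 2 + 2 * ‖c θ‖ ^ 2 ≤ 1 :=
  stmt_3_general μ ρ k h hρ0 hk a b c ha hb hc h1 h2
end

section
/- Multilevel Monte Carlo complexity theorem: suppose there exist positive constants $\alpha, \beta, \gamma, c_1, c_2, c_3$ with $\alpha \ge \gamma/2$, and independent estimators $\hat{Y}_l$ based on $N_l$ samples such that (i) $|\mathbb{E}[\hat{P}_l - P]| \le c_1 2^{-\alpha l}$, (ii) $\mathbb{E}[\hat{Y}_0] = \mathbb{E}[\hat{P}_0]$ and $\mathbb{E}[\hat{Y}_l] = \mathbb{E}[\hat{P}_l - \hat{P}_{l-1}]$ for $l > 0$, (iii) $\mathbb{V}[\hat{Y}_l] \le c_2 N_l^{-1} 2^{-\beta l}$, (iv) the cost of $\hat{Y}_l$ is at most $c_3 N_l 2^{\gamma l}$. Then there is a constant $c_4$ such that for any $0 < \varepsilon < e^{-1}$ there exist $L$ and $(N_l)_{l\le L}$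 such that $\hat{Y} = \sum_{l=0}^L \hat{Y}_l$ has mean-square error $\mathbb{E}[(\hat{Y} - \mathbb{E}[P])^2] < \varepsilon^2$ with total cost at most $c_4\varepsilon^{-2}$ if $\beta > \gamma$, $c_4\varepsilon^{-2}(\log\varepsilon)^2$ if $\beta = \gamma$, and $c_4\varepsilon^{-2-(\gamma-\beta)/\alpha}$ if $0 < \beta < \gamma$. -/
/-!
Take the finest level `L` minimal with `2^{αL} ≥ K/ε`, `K = max (2c₁) 1`, so that the squared
bias is at most `ε²/4`, and sample sizes `N_l ∝ √(V_l / C_l) = 2^{-(β+γ)l/2}`, where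
`V_l = c₂ 2^{-βl}` and `C_l = 2^{γl}` are the variance and cost per sample: this is the
Lagrange-multiplier optimum of `∑ N_l C_l` under `∑ V_l / N_l ≤ ε²/2`. As the `Ŷ_l` are
independent, the mean-square error is the sum of their variances plus the squared bias, hence
`< ε²`, while the cost is at most `2c₂c₃ ε⁻² (∑_{l≤L} 2^{(γ-β)l/2})² + c₃ ∑_{l≤L} 2^{γl}`.
The second sum is `O(ε^{-γ/α}) = O(ε⁻²)` since `γ ≤ 2α`; the first is a geometric series,
bounded if `β > γ`, equal to `L + 1 = O(|log ε|)` if `β = γ`, and `O(ε^{-(γ-β)/(2α)})` if `β < γ`.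
-/

open MeasureTheory ProbabilityTheory Finset

section MeanSquareError

variable {Ω ι : Type*} [MeasurableSpace Ω] {μ : Measure Ω} [IsProbabilityMeasure μ]

theorem integral_sub_const_sq_eq_variance_add {X : Ω → ℝ} (hX : MemLp X 2 μ) (c : ℝ) :
    ∫ ω, (X ω - c) ^ 2 ∂μ = variance X μ + (μ[X] - c) ^ 2 := by
  have hXc : MemLp (fun ω => X ω - c) 2 μ := hX.sub (memLp_const c)
  rw [← variance_sub_const hX.aestronglyMeasurable c, variance_eq_sub hXc,
    integral_sub (hX.integrable one_le_two) (integrable_const c)]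
  simp

theorem integral_sum_sub_const_sq_of_iIndepFun {Y : ι → Ω → ℝ} (hY : ∀ i, MemLp (Y i) 2 μ)
    (hind : iIndepFun Y μ) (s : Finset ι) (c : ℝ) :
    ∫ ω, (∑ i ∈ s, Y i ω - c) ^ 2 ∂μ = ∑ i ∈ s, variance (Y i) μ + (∑ i ∈ s, μ[Y i] - c) ^ 2 := by
  have hsum : (fun ω => ∑ i ∈ s, Y i ω) = ∑ i ∈ s, Y i := by ext ω; simp
  rw [integral_sub_const_sq_eq_variance_add (memLp_finsetSum s fun i _ => hY i),
    integral_finsetSum s fun i _ => (hY i).integrable one_le_two, hsum,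
    IndepFun.variance_sum (fun i _ => hY i) fun i _ j _ hij => hind.indepFun hij]

end MeanSquareError

theorem Finset.sum_range_succ_eq_of_telescoping {G : Type*} [AddCommGroup G] {a b : ℕ → G}
    (h₀ : a 0 = b 0) (h : ∀ l, 0 < l → a l = b l - b (l - 1)) (n : ℕ) :
    ∑ l ∈ range (n + 1), a l = b n := by
  rw [sum_range_succ', h₀, sum_congr rfl fun l _ => h (l + 1) l.succ_pos]
  simp only [Nat.add_sub_cancel]
  rw [sum_range_sub, sub_add_cancel]

section SampleAllocation

variable {ι : Type*} (s : Finset ι) (v w : ι → ℝ) (a : ℝ)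

noncomputable def optimalSampleSize (i : ι) : ℝ :=
  a * (∑ j ∈ s, √(v j * w j)) * √(v i / w i)

noncomputable def optimalSamples (i : ι) : ℕ := ⌈optimalSampleSize s v w a i⌉₊

variable {s v w a}

theorem sqrt_div_mul_self_eq_sqrt_mul {x y : ℝ} (hx : 0 < x) (hy : 0 < y) :
    √(x / y) * y = √(x * y) := by
  rw [Real.sqrt_div hx.le, Real.sqrt_mul hx.le]
  field_simp
  rw [Real.sq_sqrt hy.le]

theorem div_sqrt_div_eq_sqrt_mul {x y : ℝ} (hx : 0 < x) (hy : 0 < y) :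
    x / √(x / y) = √(x * y) := by
  rw [Real.sqrt_div hx.le, Real.sqrt_mul hx.le]
  have := Real.sqrt_pos.mpr hx
  field_simp
  rw [Real.sq_sqrt hx.le]

theorem optimalSampleSize_pos (hv : ∀ i, 0 < v i) (hw : ∀ i, 0 < w i) (ha : 0 < a)
    (hs : s.Nonempty) (i : ι) : 0 < optimalSampleSize s v w a i := by
  unfold optimalSampleSize
  have hS : 0 < ∑ j ∈ s, √(v j * w j) :=
    sum_pos (fun j _ => Real.sqrt_pos.mpr (mul_pos (hv j) (hw j))) hs
  have := Real.sqrt_pos.mpr (div_pos (hv i) (hw i))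
  positivity

theorem optimalSamples_pos (hv : ∀ i, 0 < v i) (hw : ∀ i, 0 < w i) (ha : 0 < a)
    (hs : s.Nonempty) (i : ι) : 0 < optimalSamples s v w a i :=
  Nat.ceil_pos.mpr (optimalSampleSize_pos hv hw ha hs i)

theorem sum_div_optimalSamples_le (hv : ∀ i, 0 < v i) (hw : ∀ i, 0 < w i) (ha : 0 < a) :
    ∑ i ∈ s, v i / optimalSamples s v w a i ≤ a⁻¹ := by
  rcases s.eq_empty_or_nonempty with rfl | hs
  · simpa using ha.le
  set S := ∑ j ∈ s, √(v j * w j)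
  have hS : 0 < S := sum_pos (fun j _ => Real.sqrt_pos.mpr (mul_pos (hv j) (hw j))) hs
  calc ∑ i ∈ s, v i / optimalSamples s v w a i
      ≤ ∑ i ∈ s, v i / (a * S * √(v i / w i)) :=
        sum_le_sum fun i _ => div_le_div_of_nonneg_left (hv i).le
          (optimalSampleSize_pos hv hw ha hs i) (Nat.le_ceil _)
    _ = ∑ i ∈ s, √(v i * w i) / (a * S) := by
        refine sum_congr rfl fun i _ => ?_
        rw [← div_sqrt_div_eq_sqrt_mul (hv i) (hw i)]
        ring
    _ = a⁻¹ := by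
        rw [← sum_div, div_mul_cancel_right₀ hS.ne']

theorem sum_optimalSamples_mul_le (hv : ∀ i, 0 < v i) (hw : ∀ i, 0 < w i) (ha : 0 < a) :
    ∑ i ∈ s, optimalSamples s v w a i * w i ≤
      a * (∑ i ∈ s, √(v i * w i)) ^ 2 + ∑ i ∈ s, w i := by
  rcases s.eq_empty_or_nonempty with rfl | hs
  · simp
  set S := ∑ j ∈ s, √(v j * w j)
  calc ∑ i ∈ s, optimalSamples s v w a i * w i
      ≤ ∑ i ∈ s, (a * S * √(v i / w i) + 1) * w i :=
        sum_le_sum fun i _ => mul_le_mul_of_nonneg_right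
          (Nat.ceil_lt_add_one (optimalSampleSize_pos hv hw ha hs i).le).le (hw i).le
    _ = ∑ i ∈ s, (a * S * √(v i * w i) + w i) := by
        refine sum_congr rfl fun i _ => ?_
        rw [← sqrt_div_mul_self_eq_sqrt_mul (hv i) (hw i)]
        ring
    _ = a * S ^ 2 + ∑ i ∈ s, w i := by
        rw [sum_add_distrib, ← mul_sum]
        ring

end SampleAllocation

section DyadicLevels

theorem two_rpow_mul_natCast (a : ℝ) (n : ℕ) : (2 : ℝ) ^ (a * n) = ((2 : ℝ) ^ a) ^ n := by
  rw [Real.rpow_mul zero_le_two, Real.rpow_natCast]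

theorem sum_range_two_rpow_le_of_neg {a : ℝ} (ha : a < 0) (n : ℕ) :
    ∑ l ∈ range n, (2 : ℝ) ^ (a * l) ≤ (1 - (2 : ℝ) ^ a)⁻¹ := by
  simp only [two_rpow_mul_natCast]
  have h := geom_sum_Ico_le_of_lt_one (m := 0) (n := n) (Real.rpow_nonneg zero_le_two a)
    (Real.rpow_lt_one_of_one_lt_of_neg one_lt_two ha)
  rwa [← range_eq_Ico, pow_zero, one_div] at h

theorem sum_range_succ_two_rpow_le_of_pos {a : ℝ} (ha : 0 < a) (n : ℕ) :
    ∑ l ∈ range (n + 1), (2 : ℝ) ^ (a * l) ≤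
      (2 : ℝ) ^ a / ((2 : ℝ) ^ a - 1) * (2 : ℝ) ^ (a * n) := by
  have hr : 1 < (2 : ℝ) ^ a := Real.one_lt_rpow one_lt_two ha
  simp only [two_rpow_mul_natCast]
  rw [geom_sum_eq hr.ne', pow_succ, div_mul_eq_mul_div, mul_comm ((2 : ℝ) ^ a)]
  gcongr
  linarith

noncomputable def dyadicLevel (α M : ℝ) : ℕ := ⌈Real.logb 2 M / α⌉₊

variable {α M : ℝ}

theorem le_two_rpow_mul_dyadicLevel (hα : 0 < α) (hM : 0 < M) :
    M ≤ (2 : ℝ) ^ (α * dyadicLevel α M) := by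
  rw [← Real.logb_le_iff_le_rpow one_lt_two hM, ← div_le_iff₀' hα]
  exact Nat.le_ceil _

theorem dyadicLevel_lt (hα : 0 < α) (hM : 1 ≤ M) :
    (dyadicLevel α M : ℝ) < Real.logb 2 M / α + 1 :=
  Nat.ceil_lt_add_one (div_nonneg (Real.logb_nonneg one_lt_two hM) hα.le)

theorem two_rpow_mul_dyadicLevel_le (hα : 0 < α) (hM : 1 ≤ M) {a : ℝ} (ha : 0 ≤ a) :
    (2 : ℝ) ^ (a * dyadicLevel α M) ≤ (2 : ℝ) ^ a * M ^ (a / α) := by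
  calc (2 : ℝ) ^ (a * dyadicLevel α M) ≤ (2 : ℝ) ^ (a * (Real.logb 2 M / α + 1)) :=
        Real.rpow_le_rpow_of_exponent_le one_le_two
          (mul_le_mul_of_nonneg_left (dyadicLevel_lt hα hM).le ha)
    _ = (2 : ℝ) ^ a * M ^ (a / α) := by
        rw [mul_add, mul_one, Real.rpow_add two_pos, mul_comm,
          show a * (Real.logb 2 M / α) = Real.logb 2 M * (a / α) by ring,
          Real.rpow_mul zero_le_two, Real.rpow_logb two_pos (by norm_num) (by linarith)]

theorem sum_two_rpow_le_dyadicLevel (hα : 0 < α) (hM : 1 ≤ M) {a : ℝ} (ha : 0 < a) :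
    ∑ l ∈ range (dyadicLevel α M + 1), (2 : ℝ) ^ (a * l) ≤
      (2 : ℝ) ^ a / ((2 : ℝ) ^ a - 1) * (2 : ℝ) ^ a * M ^ (a / α) := by
  have hr : 1 < (2 : ℝ) ^ a := Real.one_lt_rpow one_lt_two ha
  rw [mul_assoc]
  refine (sum_range_succ_two_rpow_le_of_pos ha _).trans ?_
  gcongr
  exact two_rpow_mul_dyadicLevel_le hα hM ha.le

theorem mul_inv_two_rpow_mul_dyadicLevel_le (hα : 0 < α) {c K ε : ℝ} (hK : 0 < K) (hc : 2 * c ≤ K)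
    (hε : 0 < ε) : c * ((2 : ℝ) ^ (α * dyadicLevel α (K * ε⁻¹)))⁻¹ ≤ ε / 2 := by
  have hM := le_two_rpow_mul_dyadicLevel hα (mul_pos hK (inv_pos.mpr hε))
  rw [mul_inv_le_iff₀ (by positivity)]
  calc c ≤ ε / 2 * (K * ε⁻¹) := by field_simp; linarith
    _ ≤ _ := by gcongr

end DyadicLevels

section LevelSamples

theorem sqrt_mul_inv_two_rpow_mul_two_rpow {c : ℝ} (hc : 0 ≤ c) (β γ x : ℝ) :
    √(c * ((2 : ℝ) ^ (β * x))⁻¹ * (2 : ℝ) ^ (γ * x)) = √c * (2 : ℝ) ^ ((γ - β) / 2 * x) := by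
  rw [← Real.rpow_neg zero_le_two, mul_assoc, ← Real.rpow_add two_pos,
    Real.sqrt_mul hc, Real.sqrt_eq_rpow (2 ^ _), ← Real.rpow_mul zero_le_two]
  ring_nf

noncomputable def mlmcSamples (β γ c ε : ℝ) (L : ℕ) : ℕ → ℕ :=
  optimalSamples (range (L + 1)) (fun l => c * ((2 : ℝ) ^ (β * l))⁻¹) (fun l => (2 : ℝ) ^ (γ * l))
    (2 * ε⁻¹ ^ 2)

variable {β γ c ε : ℝ}

theorem mlmcSamples_pos (hc : 0 < c) (hε : 0 < ε) (L l : ℕ) : 0 < mlmcSamples β γ c ε L l :=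
  optimalSamples_pos (fun _ => by positivity) (fun _ => by positivity) (by positivity)
    nonempty_range_add_one l

theorem sum_variance_bound_mlmcSamples_le (hc : 0 < c) (hε : 0 < ε) (L : ℕ) :
    ∑ l ∈ range (L + 1), c * (mlmcSamples β γ c ε L l : ℝ)⁻¹ * ((2 : ℝ) ^ (β * l))⁻¹ ≤
      ε ^ 2 / 2 := by
  calc _ = ∑ l ∈ range (L + 1), c * ((2 : ℝ) ^ (β * l))⁻¹ / mlmcSamples β γ c ε L l :=
        sum_congr rfl fun l _ => by ring
    _ ≤ (2 * ε⁻¹ ^ 2)⁻¹ :=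
        sum_div_optimalSamples_le (fun _ => by positivity) (fun _ => by positivity) (by positivity)
    _ = ε ^ 2 / 2 := by field_simp

theorem sum_mlmcSamples_mul_two_rpow_le (hc : 0 < c) (hε : 0 < ε) (L : ℕ) :
    ∑ l ∈ range (L + 1), (mlmcSamples β γ c ε L l : ℝ) * (2 : ℝ) ^ (γ * l) ≤
      2 * c * (ε⁻¹ ^ 2 * (∑ l ∈ range (L + 1), (2 : ℝ) ^ ((γ - β) / 2 * l)) ^ 2) +
        ∑ l ∈ range (L + 1), (2 : ℝ) ^ (γ * l) := by
  refine (sum_optimalSamples_mul_le (fun _ => by positivity) (fun _ => by positivity)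
    (by positivity)).trans_eq ?_
  simp only [sqrt_mul_inv_two_rpow_mul_two_rpow hc.le, ← mul_sum, mul_pow, Real.sq_sqrt hc.le]
  ring

end LevelSamples

section Rates

open Real

noncomputable def mlmcRate (α β γ ε : ℝ) : ℝ :=
  if γ < β then ε⁻¹ ^ (2 : ℝ)
  else if β = γ then ε⁻¹ ^ (2 : ℝ) * log ε ^ 2
  else ε⁻¹ ^ (2 + (γ - β) / α)

variable {α β γ K ε : ℝ}

theorem one_lt_log_inv_of_lt_exp_neg_one (hε : 0 < ε) (h : ε < exp (-1)) : 1 < log ε⁻¹ := by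
  rw [log_inv]
  linarith [(log_lt_iff_lt_exp hε).mpr h]

theorem one_lt_inv_of_lt_exp_neg_one (hε : 0 < ε) (h : ε < exp (-1)) : 1 < ε⁻¹ :=
  (one_lt_inv₀ hε).mpr (h.trans (exp_lt_one_iff.mpr (by norm_num)))

theorem inv_sq_le_mlmcRate (hα : 0 < α) (hε : 0 < ε) (h : ε < exp (-1)) :
    ε⁻¹ ^ 2 ≤ mlmcRate α β γ ε := by
  have hE := one_lt_inv_of_lt_exp_neg_one hε h
  have hlog : 1 ≤ log ε ^ 2 := by
    have := one_lt_log_inv_of_lt_exp_neg_one hε h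
    rw [log_inv] at this
    nlinarith
  rw [← rpow_two]
  unfold mlmcRate
  split_ifs with hγβ hβγ
  · rfl
  · exact le_mul_of_one_le_right (by positivity) hlog
  · refine rpow_le_rpow_of_exponent_le hE.le (le_add_of_nonneg_right (div_nonneg ?_ hα.le))
    linarith [lt_of_le_of_ne (not_lt.mp hγβ) hβγ]

theorem dyadicLevel_add_one_le_mul_log (hα : 0 < α) (hK : 1 ≤ K) (hε : 0 < ε)
    (h : ε < exp (-1)) :
    (dyadicLevel α (K * ε⁻¹) : ℝ) + 1 ≤ ((log K + 1) / (α * log 2) + 2) * log ε⁻¹ := by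
  have hE := one_lt_inv_of_lt_exp_neg_one hε h
  have hlogE := one_lt_log_inv_of_lt_exp_neg_one hε h
  have hlogK : 0 ≤ log K := log_nonneg hK
  have hlog2 : 0 < α * log 2 := mul_pos hα (log_pos one_lt_two)
  have hnum : log (K * ε⁻¹) ≤ (log K + 1) * log ε⁻¹ := by
    rw [log_mul (by positivity) (by positivity)]
    nlinarith
  have hlev := dyadicLevel_lt hα (one_le_mul_of_one_le_of_one_le hK hE.le)
  rw [logb, div_div, mul_comm (log 2)] at hlev
  calc (dyadicLevel α (K * ε⁻¹) : ℝ) + 1 ≤ log (K * ε⁻¹) / (α * log 2) + 2 := by linarith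
    _ ≤ (log K + 1) * log ε⁻¹ / (α * log 2) + 2 * log ε⁻¹ := by gcongr; linarith
    _ = ((log K + 1) / (α * log 2) + 2) * log ε⁻¹ := by ring

theorem inv_sq_mul_sq_geom_sum_le_of_gamma_lt_beta (hγβ : γ < β) (L : ℕ) :
    ε⁻¹ ^ 2 * (∑ l ∈ range (L + 1), (2 : ℝ) ^ ((γ - β) / 2 * l)) ^ 2 ≤
      ((1 - (2 : ℝ) ^ ((γ - β) / 2))⁻¹) ^ 2 * ε⁻¹ ^ (2 : ℝ) := by
  rw [rpow_two, mul_comm]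
  gcongr
  exact sum_range_two_rpow_le_of_neg (by linarith) _

theorem inv_sq_mul_sq_geom_sum_le_of_beta_eq_gamma (hα : 0 < α) (hK : 1 ≤ K) (hε : 0 < ε)
    (h : ε < exp (-1)) :
    ε⁻¹ ^ 2 * (∑ l ∈ range (dyadicLevel α (K * ε⁻¹) + 1), (2 : ℝ) ^ ((γ - γ) / 2 * l)) ^ 2 ≤
      ((log K + 1) / (α * log 2) + 2) ^ 2 * (ε⁻¹ ^ (2 : ℝ) * log ε ^ 2) := by
  simp only [sub_self, zero_div, zero_mul, rpow_zero, sum_const, card_range, nsmul_eq_mul,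
    mul_one, Nat.cast_add, Nat.cast_one]
  rw [rpow_two, ← neg_sq (log ε), ← log_inv, mul_left_comm _ (ε⁻¹ ^ 2)]
  gcongr ε⁻¹ ^ 2 * ?_
  rw [← mul_pow]
  gcongr
  exact dyadicLevel_add_one_le_mul_log hα hK hε h

theorem inv_sq_mul_sq_geom_sum_le_of_beta_lt_gamma (hα : 0 < α) (hK : 1 ≤ K) (hε : 0 < ε)
    (h : ε < exp (-1)) (hβγ : β < γ) :
    ε⁻¹ ^ 2 * (∑ l ∈ range (dyadicLevel α (K * ε⁻¹) + 1), (2 : ℝ) ^ ((γ - β) / 2 * l)) ^ 2 ≤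
      ((2 : ℝ) ^ ((γ - β) / 2) / ((2 : ℝ) ^ ((γ - β) / 2) - 1) * (2 : ℝ) ^ ((γ - β) / 2) *
        K ^ ((γ - β) / 2 / α)) ^ 2 * ε⁻¹ ^ (2 + (γ - β) / α) := by
  have hE := one_lt_inv_of_lt_exp_neg_one hε h
  have hS := sum_two_rpow_le_dyadicLevel hα (one_le_mul_of_one_le_of_one_le hK hE.le)
    (a := (γ - β) / 2) (by linarith)
  rw [mul_rpow (by linarith) (by linarith), ← mul_assoc] at hS
  calc _ ≤ ε⁻¹ ^ 2 * (_ * ε⁻¹ ^ ((γ - β) / 2 / α)) ^ 2 := by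
        gcongr
    _ = _ := by
        rw [rpow_add (by linarith), mul_pow, ← rpow_natCast (ε⁻¹ ^ _), ← rpow_mul (by linarith),
          rpow_two]
        ring_nf

theorem exists_inv_sq_mul_sq_geom_sum_le_mlmcRate (hα : 0 < α) (hK : 1 ≤ K) :
    ∃ C > 0, ∀ ε : ℝ, 0 < ε → ε < exp (-1) →
      ε⁻¹ ^ 2 * (∑ l ∈ range (dyadicLevel α (K * ε⁻¹) + 1), (2 : ℝ) ^ ((γ - β) / 2 * l)) ^ 2 ≤
        C * mlmcRate α β γ ε := by
  rcases lt_trichotomy γ β with hγβ | rfl | hβγ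
  · have hr : (2 : ℝ) ^ ((γ - β) / 2) < 1 := rpow_lt_one_of_one_lt_of_neg one_lt_two (by linarith)
    refine ⟨_, pow_pos (inv_pos.mpr (sub_pos.mpr hr)) 2, fun ε _ _ => ?_⟩
    rw [mlmcRate, if_pos hγβ]
    exact inv_sq_mul_sq_geom_sum_le_of_gamma_lt_beta hγβ _
  · have hlog2 : 0 < α * log 2 := mul_pos hα (log_pos one_lt_two)
    have hlogK : 0 ≤ log K := log_nonneg hK
    refine ⟨((log K + 1) / (α * log 2) + 2) ^ 2, by positivity, fun ε hε h => ?_⟩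
    rw [mlmcRate, if_neg (lt_irrefl γ), if_pos rfl]
    exact inv_sq_mul_sq_geom_sum_le_of_beta_eq_gamma hα hK hε h
  · have hr : 0 < (2 : ℝ) ^ ((γ - β) / 2) - 1 :=
      sub_pos.mpr (one_lt_rpow one_lt_two (by linarith))
    refine ⟨((2 : ℝ) ^ ((γ - β) / 2) / ((2 : ℝ) ^ ((γ - β) / 2) - 1) * (2 : ℝ) ^ ((γ - β) / 2) *
      K ^ ((γ - β) / 2 / α)) ^ 2, by positivity, fun ε hε h => ?_⟩
    rw [mlmcRate, if_neg (not_lt.mpr hβγ.le), if_neg hβγ.ne]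
    exact inv_sq_mul_sq_geom_sum_le_of_beta_lt_gamma hα hK hε h hβγ

theorem exists_geom_sum_le_mlmcRate (hα : 0 < α) (hγ : 0 < γ) (hαγ : γ / 2 ≤ α) (hK : 1 ≤ K) :
    ∃ C > 0, ∀ ε : ℝ, 0 < ε → ε < exp (-1) →
      ∑ l ∈ range (dyadicLevel α (K * ε⁻¹) + 1), (2 : ℝ) ^ (γ * l) ≤ C * mlmcRate α β γ ε := by
  have hr : 1 < (2 : ℝ) ^ γ := one_lt_rpow one_lt_two hγ
  refine ⟨(2 : ℝ) ^ γ / ((2 : ℝ) ^ γ - 1) * (2 : ℝ) ^ γ * K ^ 2,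
    mul_pos (mul_pos (div_pos (by linarith) (by linarith)) (by linarith)) (by positivity),
    fun ε hε h => ?_⟩
  have hM : 1 ≤ K * ε⁻¹ := one_le_mul_of_one_le_of_one_le hK (one_lt_inv_of_lt_exp_neg_one hε h).le
  calc _ ≤ (2 : ℝ) ^ γ / ((2 : ℝ) ^ γ - 1) * (2 : ℝ) ^ γ * (K * ε⁻¹) ^ (γ / α) :=
        sum_two_rpow_le_dyadicLevel hα hM hγ
    _ ≤ (2 : ℝ) ^ γ / ((2 : ℝ) ^ γ - 1) * (2 : ℝ) ^ γ * (K * ε⁻¹) ^ (2 : ℝ) := by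
        gcongr
        rw [div_le_iff₀ hα]
        linarith
    _ ≤ _ := by
        rw [rpow_two, mul_pow, ← mul_assoc]
        gcongr
        exact inv_sq_le_mlmcRate hα hε h

end Rates

theorem stmt_16_general {Ω : Type*} [MeasurableSpace Ω] (P : Measure Ω) [IsProbabilityMeasure P]
    (α β γ c₁ c₂ c₃ : ℝ)
    (hα : 0 < α) (hγ : 0 < γ)
    (hc₂ : 0 < c₂) (hc₃ : 0 < c₃)
    (hαγ : γ / 2 ≤ α)
    (Pf : Ω → ℝ) (Phat : ℕ → Ω → ℝ)
    (Y : ℕ → ℕ → Ω → ℝ) (cost : ℕ → ℕ → ℝ)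
    (hYmeas : ∀ l N, MemLp (Y l N) 2 P)
    (hYindep : ∀ N : ℕ → ℕ, iIndepFun (fun l => Y l (N l)) P)
    (hi : ∀ l : ℕ, |(∫ ω, Phat l ω ∂P) - ∫ ω, Pf ω ∂P| ≤ c₁ * ((2 : ℝ) ^ (α * l))⁻¹)
    (hii0 : ∀ N : ℕ, 0 < N → (∫ ω, Y 0 N ω ∂P) = ∫ ω, Phat 0 ω ∂P)
    (hii : ∀ l : ℕ, 0 < l → ∀ N : ℕ, 0 < N →
      (∫ ω, Y l N ω ∂P) = (∫ ω, Phat l ω ∂P) - ∫ ω, Phat (l - 1) ω ∂P)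
    (hiii : ∀ (l N : ℕ), 0 < N →
      variance (Y l N) P ≤ c₂ * (N : ℝ)⁻¹ * ((2 : ℝ) ^ (β * l))⁻¹)
    (hiv : ∀ (l N : ℕ), 0 < N → cost l N ≤ c₃ * N * (2 : ℝ) ^ (γ * l)) :
    ∃ c₄ : ℝ, 0 < c₄ ∧
      ∀ ε : ℝ, 0 < ε → ε < Real.exp (-1) →
        ∃ (L : ℕ) (N : ℕ → ℕ), (∀ l ≤ L, 0 < N l) ∧
          (∫ ω, ((∑ l ∈ Finset.range (L + 1), Y l (N l) ω) - ∫ ω', Pf ω' ∂P) ^ 2 ∂P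
            < ε ^ 2) ∧
          (∑ l ∈ Finset.range (L + 1), cost l (N l) ≤
            if γ < β then c₄ * ε⁻¹ ^ (2 : ℝ)
            else if β = γ then c₄ * ε⁻¹ ^ (2 : ℝ) * Real.log ε ^ 2
            else c₄ * ε⁻¹ ^ (2 + (γ - β) / α)) := by
  set K := max (2 * c₁) 1
  have hK : 1 ≤ K := le_max_right _ _
  obtain ⟨C₁, hC₁, hS⟩ := exists_inv_sq_mul_sq_geom_sum_le_mlmcRate (β := β) (γ := γ) hα hK
  obtain ⟨C₂, hC₂, hT⟩ := exists_geom_sum_le_mlmcRate (β := β) hα hγ hαγ hK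
  refine ⟨c₃ * (2 * c₂ * C₁ + C₂), by positivity, fun ε hε h => ?_⟩
  set L := dyadicLevel α (K * ε⁻¹)
  set N := mlmcSamples β γ c₂ ε L
  have hN : ∀ l, 0 < N l := mlmcSamples_pos hc₂ hε L
  refine ⟨L, N, fun l _ => hN l, ?_, ?_⟩
  · have hvar : ∑ l ∈ range (L + 1), variance (Y l (N l)) P ≤ ε ^ 2 / 2 :=
      (sum_le_sum fun l _ => hiii l _ (hN l)).trans (sum_variance_bound_mlmcSamples_le hc₂ hε L)
    have hbias := abs_le.mp ((hi L).trans
      (mul_inv_two_rpow_mul_dyadicLevel_le hα (zero_lt_one.trans_le hK) (le_max_left _ _) hε))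
    rw [integral_sum_sub_const_sq_of_iIndepFun (fun l => hYmeas l (N l)) (hYindep N),
      sum_range_succ_eq_of_telescoping (hii0 _ (hN 0)) fun l hl => hii l hl _ (hN l)]
    nlinarith [sq_le_sq' hbias.1 hbias.2]
  · calc ∑ l ∈ range (L + 1), cost l (N l)
        ≤ c₃ * ∑ l ∈ range (L + 1), (N l : ℝ) * (2 : ℝ) ^ (γ * l) := by
          rw [mul_sum]
          exact sum_le_sum fun l _ => (hiv l _ (hN l)).trans_eq (mul_assoc _ _ _)
      _ ≤ c₃ * (2 * c₂ * (C₁ * mlmcRate α β γ ε) + C₂ * mlmcRate α β γ ε) := by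
          grw [sum_mlmcSamples_mul_two_rpow_le hc₂ hε L, hS ε hε h, hT ε hε h]
      _ = _ := by
          rw [mlmcRate]
          split_ifs <;> ring

/-- Multilevel Monte Carlo complexity theorem.  `Y l N` is the level-`l` estimator based
on `N` samples and `cost l N` its computational cost.  Under the weak-error, unbiasedness,
variance and cost assumptions (i)-(iv), for every accuracy `0 < ε < e⁻¹` there are a
finest level `L` and sample numbers `Nₗ` such that the multilevel estimator
`Ŷ = ∑_{l≤L} Y l Nₗ` has mean-square error below `ε²` at a total cost bounded by
`c₄ ε⁻²`, `c₄ ε⁻² (log ε)²`, or `c₄ ε^{-2-(γ-β)/α}` according to the sign of `β - γ`. -/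
theorem stmt_16 {Ω : Type*} [MeasurableSpace Ω] (P : Measure Ω) [IsProbabilityMeasure P]
    (α β γ c₁ c₂ c₃ : ℝ)
    (hα : 0 < α) (hβ : 0 < β) (hγ : 0 < γ)
    (hc₁ : 0 < c₁) (hc₂ : 0 < c₂) (hc₃ : 0 < c₃)
    (hαγ : γ / 2 ≤ α)
    (Pf : Ω → ℝ) (Phat : ℕ → Ω → ℝ)
    (hPf : Integrable Pf P) (hPhat : ∀ l, Integrable (Phat l) P)
    (Y : ℕ → ℕ → Ω → ℝ) (cost : ℕ → ℕ → ℝ)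
    (hYmeas : ∀ l N, MemLp (Y l N) 2 P)
    (hYindep : ∀ N : ℕ → ℕ, iIndepFun (fun l => Y l (N l)) P)
    (hi : ∀ l : ℕ, |(∫ ω, Phat l ω ∂P) - ∫ ω, Pf ω ∂P| ≤ c₁ * ((2 : ℝ) ^ (α * l))⁻¹)
    (hii0 : ∀ N : ℕ, 0 < N → (∫ ω, Y 0 N ω ∂P) = ∫ ω, Phat 0 ω ∂P)
    (hii : ∀ l : ℕ, 0 < l → ∀ N : ℕ, 0 < N →
      (∫ ω, Y l N ω ∂P) = (∫ ω, Phat l ω ∂P) - ∫ ω, Phat (l - 1) ω ∂P)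
    (hiii : ∀ (l N : ℕ), 0 < N →
      variance (Y l N) P ≤ c₂ * (N : ℝ)⁻¹ * ((2 : ℝ) ^ (β * l))⁻¹)
    (hiv : ∀ (l N : ℕ), 0 < N → cost l N ≤ c₃ * N * (2 : ℝ) ^ (γ * l)) :
    ∃ c₄ : ℝ, 0 < c₄ ∧
      ∀ ε : ℝ, 0 < ε → ε < Real.exp (-1) →
        ∃ (L : ℕ) (N : ℕ → ℕ), (∀ l ≤ L, 0 < N l) ∧
          (∫ ω, ((∑ l ∈ Finset.range (L + 1), Y l (N l) ω) - ∫ ω', Pf ω' ∂P) ^ 2 ∂P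
            < ε ^ 2) ∧
          (∑ l ∈ Finset.range (L + 1), cost l (N l) ≤
            if γ < β then c₄ * ε⁻¹ ^ (2 : ℝ)
            else if β = γ then c₄ * ε⁻¹ ^ (2 : ℝ) * Real.log ε ^ 2
            else c₄ * ε⁻¹ ^ (2 + (γ - β) / α)) :=
  stmt_16_general P α β γ c₁ c₂ c₃ hα hγ hc₂ hc₃ hαγ Pf Phat Y cost hYmeas hYindep hi hii0 hii hiii
    hiv
end
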